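/- For any real γ > -1, ∫₀¹ dν / ((1+γν)² √(ν(1-ν))) = π(2+γ) / (2(1+γ)^{3/2}). -/

import Mathlib

/-!
The primitive
`(2 + γ) / (1 + γ)^(3/2) * arcsin √((1 + γ) ν / (1 + γ ν)) + γ / (1 + γ) * √(ν (1 - ν)) / (1 + γ ν)`
of the integrand is continuous on the closed interval `[0, 1]` (the arcsin form, unlike the
arctan form `arctan √((1 + γ) ν / (1 - ν))`, has no singularity at `ν = 1`), and the integrand
is nonnegative, so the improper integral is integrable and equals the difference of the
endpoint values `π (2 + γ) / (2 (1 + γ)^(3/2))` and `0`.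
-/

open Real Set MeasureTheory

lemma one_add_mul_pos_of_mem_Icc {γ t : ℝ} (hγ : -1 < γ) (ht : t ∈ Icc (0:ℝ) 1) :
    0 < 1 + γ * t := by
  obtain ⟨h0, h1⟩ := ht
  nlinarith [mul_le_mul_of_nonneg_left h1 h0, mul_nonneg h0 (by linarith : 0 ≤ 1 + γ)]

lemma rpow_three_halves {a : ℝ} (ha : 0 ≤ a) : a ^ ((3:ℝ) / 2) = a * √a := by
  rw [sqrt_eq_rpow, show (3:ℝ) / 2 = 1 + 1 / 2 by norm_num, rpow_add' ha (by norm_num), rpow_one]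

lemma hasDerivAt_sqrt_mul_one_sub_div {γ ν : ℝ} (h0 : 0 < ν) (h1 : ν < 1) (hp : 1 + γ * ν ≠ 0) :
    HasDerivAt (fun t => √(t * (1 - t)) / (1 + γ * t))
      ((1 - (2 + γ) * ν) / (2 * (1 + γ * ν) ^ 2 * √(ν * (1 - ν)))) ν := by
  have hq : 0 < ν * (1 - ν) := mul_pos h0 (by linarith)
  have hid := hasDerivAt_id' ν
  refine (((hid.mul (hid.const_sub 1)).sqrt hq.ne').div
    ((hid.const_mul γ).const_add 1) hp).congr_deriv ?_
  simp only [Pi.mul_apply]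
  field_simp
  rw [sq_sqrt hq.le]
  ring

lemma hasDerivAt_arcsin_sqrt_div {γ ν : ℝ} (hγ : -1 < γ) (h0 : 0 < ν) (h1 : ν < 1) :
    HasDerivAt (fun t => arcsin (√(1 + γ) * √t / √(1 + γ * t)))
      (√(1 + γ) / (2 * (1 + γ * ν) * √(ν * (1 - ν)))) ν := by
  have hp := one_add_mul_pos_of_mem_Icc hγ ⟨h0.le, h1.le⟩
  have hw := sqrt_pos.2 hp
  have hxs := sq_sqrt h0.le
  have hws := sq_sqrt hp.le
  have hu : 1 - (√(1 + γ) * √ν / √(1 + γ * ν)) ^ 2 = (√(1 - ν) / √(1 + γ * ν)) ^ 2 := by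
    rw [div_pow, div_pow, mul_pow, hxs, hws, sq_sqrt (by linarith), sq_sqrt (sub_pos.2 h1).le]
    field_simp
    ring
  have hu_lt : |√(1 + γ) * √ν / √(1 + γ * ν)| < 1 := by
    rw [← sq_lt_one_iff_abs_lt_one, ← sub_pos, hu]
    positivity
  have hdu : HasDerivAt (fun t => √(1 + γ) * √t / √(1 + γ * t))
      (√(1 + γ) / (2 * √ν * √(1 + γ * ν) ^ 3)) ν := by
    refine ((hasDerivAt_sqrt h0.ne').const_mul _ |>.div
      ((((hasDerivAt_id' ν).const_mul γ).const_add 1).sqrt hp.ne') hw.ne').congr_deriv ?_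
    field_simp
    linear_combination √(1 + γ) * hws - √(1 + γ) * γ * hxs
  obtain ⟨hu_gt_neg_one, hu_lt_one⟩ := abs_lt.1 hu_lt
  refine ((hasDerivAt_arcsin hu_gt_neg_one.ne' hu_lt_one.ne).comp ν hdu).congr_deriv ?_
  rw [hu, sqrt_sq (by positivity), sqrt_mul h0.le]
  field_simp
  rw [mul_comm ν γ, hws]

noncomputable def primitive (γ t : ℝ) : ℝ :=
  (2 + γ) / (1 + γ) ^ ((3:ℝ) / 2) * arcsin (√(1 + γ) * √t / √(1 + γ * t))
    + γ / (1 + γ) * (√(t * (1 - t)) / (1 + γ * t))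

lemma hasDerivAt_primitive {γ ν : ℝ} (hγ : -1 < γ) (h0 : 0 < ν) (h1 : ν < 1) :
    HasDerivAt (primitive γ) (1 / ((1 + γ * ν) ^ 2 * √(ν * (1 - ν)))) ν := by
  have hp := one_add_mul_pos_of_mem_Icc hγ ⟨h0.le, h1.le⟩
  have ha : 0 < 1 + γ := by linarith
  refine (((hasDerivAt_arcsin_sqrt_div hγ h0 h1).const_mul _).add
    ((hasDerivAt_sqrt_mul_one_sub_div h0 h1 hp.ne').const_mul _)).congr_deriv ?_
  rw [rpow_three_halves ha.le]
  field_simp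
  ring

lemma continuousOn_primitive {γ : ℝ} (hγ : -1 < γ) : ContinuousOn (primitive γ) (Icc 0 1) := by
  have hp : ∀ t ∈ Icc (0:ℝ) 1, 1 + γ * t ≠ 0 := fun t ht => (one_add_mul_pos_of_mem_Icc hγ ht).ne'
  have hw : ∀ t ∈ Icc (0:ℝ) 1, √(1 + γ * t) ≠ 0 :=
    fun t ht => (sqrt_pos.2 (one_add_mul_pos_of_mem_Icc hγ ht)).ne'
  unfold primitive
  fun_prop (disch := assumption)

lemma primitive_zero (γ : ℝ) : primitive γ 0 = 0 := by
  simp [primitive]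

lemma primitive_one {γ : ℝ} (hγ : -1 < γ) :
    primitive γ 1 = π * (2 + γ) / (2 * (1 + γ) ^ ((3:ℝ) / 2)) := by
  have hz : √(1 + γ) ≠ 0 := (sqrt_pos.2 (by linarith)).ne'
  simp only [primitive, sqrt_one, mul_one, sub_self, mul_zero, sqrt_zero, zero_div, div_self hz,
    arcsin_one, add_zero]
  ring

theorem integral_square (γ : ℝ) (hγ : γ > -1) :
    ∫ ν in (0:ℝ)..1, 1 / ((1 + γ * ν) ^ 2 * Real.sqrt (ν * (1 - ν)))
      = π * (2 + γ) / (2 * (1 + γ) ^ ((3:ℝ)/2)) := by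
  have hderiv : ∀ ν ∈ Ioo (0:ℝ) 1,
      HasDerivAt (primitive γ) (1 / ((1 + γ * ν) ^ 2 * √(ν * (1 - ν)))) ν :=
    fun ν hν => hasDerivAt_primitive hγ hν.1 hν.2
  have hcont := continuousOn_primitive hγ
  have hint : IntervalIntegrable (fun ν => 1 / ((1 + γ * ν) ^ 2 * √(ν * (1 - ν)))) volume 0 1 :=
    intervalIntegral.intervalIntegrable_deriv_of_nonneg (by simpa using hcont)
      (by simpa using hderiv) (fun ν _ => by positivity)
  rw [intervalIntegral.integral_eq_sub_of_hasDerivAt_of_le zero_le_one hcont hderiv hint,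
    primitive_one hγ, primitive_zero, sub_zero]
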